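/- Let ρ_AB be a density matrix on ℂ^{d_A} ⊗ ℂ^{d_B} with invertible reduced state ρ_B, and let {M_{a|x}}_{a,x} be a measurement assemblage on ℂ^{d_A}. If {M_{a|x}}_{a,x} is k-simulable, then the steering equivalent observables {S_{a|x}}_{a,x} are k-compatible with a k-copy joint observable of product form. Consequently, if {S_{a|x}}_{a,x} admits no k-copy joint observable of product form, then {M_{a|x}}_{a,x} is not k-simulable. -/

import Mathlib

open Matrix BigOperators
open scoped Kronecker ComplexOrder

noncomputable section

/-- A POVM: a finite family of positive semidefinite matrices summing to the identity. -/
def IsPOVM {ι n : Type*} [Fintype ι] [Fintype n] [DecidableEq n]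
    (M : ι → Matrix n n ℂ) : Prop :=
  (∀ i, (M i).PosSemidef) ∧ ∑ i, M i = 1

/-- A density matrix: positive semidefinite with trace one. -/
def IsDensity {n : Type*} [Fintype n] [DecidableEq n] (ρ : Matrix n n ℂ) : Prop :=
  ρ.PosSemidef ∧ ρ.trace = 1

/-- The `k`-fold tensor power of a `d × d` matrix, realized on the index type `Fin k → Fin d`. -/
def tpow {d : ℕ} (k : ℕ) (ρ : Matrix (Fin d) (Fin d) ℂ) :
    Matrix (Fin k → Fin d) (Fin k → Fin d) ℂ :=
  Matrix.of fun f g => ∏ y, ρ (f y) (g y)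

/-- The tensor product `A 0 ⊗ A 1 ⊗ ⋯ ⊗ A (k-1)` of a `k`-tuple of `d × d` matrices. -/
def prodOp {d k : ℕ} (A : Fin k → Matrix (Fin d) (Fin d) ℂ) :
    Matrix (Fin k → Fin d) (Fin k → Fin d) ℂ :=
  Matrix.of fun f g => ∏ y, A y (f y) (g y)

/-- Partial trace over the first tensor factor. -/
def trA {dA dB : ℕ} (M : Matrix (Fin dA × Fin dB) (Fin dA × Fin dB) ℂ) :
    Matrix (Fin dB) (Fin dB) ℂ :=
  Matrix.of fun j j' => ∑ i, M (i, j) (i, j')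

-- The inverse of the positive square root of a positive semidefinite matrix
-- (junk value if the matrix is not positive semidefinite).
open Classical in
def invSqrt {n : Type*} [Fintype n] [DecidableEq n] (A : Matrix n n ℂ) : Matrix n n ℂ :=
  (if h : A.PosSemidef then (h.1.eigenvectorUnitary : Matrix n n ℂ) *
    diagonal (fun i => ((Real.sqrt (h.1.eigenvalues i) : ℝ) : ℂ)) *
    (star h.1.eigenvectorUnitary : Matrix n n ℂ) else 0)⁻¹

/-- The steering-equivalent-observable map: `A ↦ ρ_B^{-1/2} tr_A[(A ⊗ 𝟙) ρ_AB] ρ_B^{-1/2}`. -/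
def SEO {dA dB : ℕ} (ρAB : Matrix (Fin dA × Fin dB) (Fin dA × Fin dB) ℂ)
    (A : Matrix (Fin dA) (Fin dA) ℂ) : Matrix (Fin dB) (Fin dB) ℂ :=
  invSqrt (trA ρAB) * trA ((A ⊗ₖ (1 : Matrix (Fin dB) (Fin dB) ℂ)) * ρAB) * invSqrt (trA ρAB)

/-- `k`-simulability: the assemblage arises from `k` POVMs by classical pre- and
post-processing. -/
def KSimulable {d na nx : ℕ} (k : ℕ)
    (M : Fin nx → Fin na → Matrix (Fin d) (Fin d) ℂ) : Prop :=
  ∃ (nb : ℕ) (B : Fin k → Fin nb → Matrix (Fin d) (Fin d) ℂ)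
    (p : Fin nx → Fin k → ℝ) (q : Fin nx → Fin k → Fin nb → Fin na → ℝ),
    (∀ y, IsPOVM (B y)) ∧
    (∀ x y, 0 ≤ p x y) ∧ (∀ x, ∑ y, p x y = 1) ∧
    (∀ x y b a, 0 ≤ q x y b a) ∧ (∀ x y b, ∑ a, q x y b a = 1) ∧
    ∀ x a, M x a = ∑ y, p x y • ∑ b, q x y b a • B y b

/-- `k`-compatibility with a `k`-copy joint observable of product form:
there are `k` POVMs `B y` and a post-processing `r` such that
`tr[ρ M_{a|x}] = ∑_b r(a|x,b) tr[ρ^{⊗k} (B_{b₁|1} ⊗ ⋯ ⊗ B_{b_k|k})]` for all states `ρ`. -/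
def KCompatibleProd {d na nx : ℕ} (k : ℕ)
    (M : Fin nx → Fin na → Matrix (Fin d) (Fin d) ℂ) : Prop :=
  ∃ (nb : ℕ) (B : Fin k → Fin nb → Matrix (Fin d) (Fin d) ℂ)
    (r : Fin nx → (Fin k → Fin nb) → Fin na → ℝ),
    (∀ y, IsPOVM (B y)) ∧
    (∀ x b a, 0 ≤ r x b a) ∧ (∀ x b, ∑ a, r x b a = 1) ∧
    ∀ ρ : Matrix (Fin d) (Fin d) ℂ, IsDensity ρ → ∀ x a,
      (ρ * M x a).trace =
        ∑ b : Fin k → Fin nb, r x b a • (tpow k ρ * prodOp fun y => B y (b y)).trace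

/-! The map `A ↦ S(A)` is linear, positive, and unital (the factors `ρ_B^{-1/2}` make it so), so
it carries the simulating POVMs `B_{·|y}` to POVMs and a simulation of `M` to a simulation of
the SEO with the same `p` and `q`. A `k`-simulable assemblage is `k`-compatible through the product
observable `⊗_y B_{b_y|y}`: on `ρ^{⊗k}` its outcome `b` has law `∏_y tr[ρ B_{b_y|y}]`, whose
`y`-th marginal is `tr[ρ B_{·|y}]`, so the post-processing `r(a|x,b) = ∑_y p(y|x) q(a|x,b_y,y)`
reproduces `M`. -/

open scoped MatrixOrder

section ProductOperators

variable {d k : ℕ}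

lemma prodOp_mul_prodOp (A B : Fin k → Matrix (Fin d) (Fin d) ℂ) :
    prodOp A * prodOp B = prodOp fun y => A y * B y := by
  ext f g
  simp only [prodOp, mul_apply, of_apply, Fintype.prod_sum, Finset.prod_mul_distrib]

lemma trace_prodOp (A : Fin k → Matrix (Fin d) (Fin d) ℂ) :
    (prodOp A).trace = ∏ y, (A y).trace := by
  simp only [trace, diag, prodOp, of_apply, Fintype.prod_sum]

lemma trace_tpow_mul_prodOp (ρ : Matrix (Fin d) (Fin d) ℂ)
    (A : Fin k → Matrix (Fin d) (Fin d) ℂ) :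
    (tpow k ρ * prodOp A).trace = ∏ y, (ρ * A y).trace :=
  (congrArg trace (prodOp_mul_prodOp (fun _ => ρ) A)).trans (trace_prodOp _)

end ProductOperators

lemma Fintype.sum_mul_prod_of_sum_eq_one {ι κ R : Type*} [Fintype ι] [DecidableEq ι]
    [Fintype κ] [CommSemiring R] {t : ι → κ → R} (ht : ∀ i, ∑ c, t i c = 1) (i : ι)
    (g : κ → R) :
    ∑ b : ι → κ, g (b i) * ∏ j, t j (b j) = ∑ c, g c * t i c := by
  set t' := Function.update t i fun c => g c * t i c
  have hprod (b : ι → κ) : g (b i) * ∏ j, t j (b j) = ∏ j, t' j (b j) := by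
    rw [← Finset.mul_prod_erase _ _ (Finset.mem_univ i),
      ← Finset.mul_prod_erase _ _ (Finset.mem_univ i), ← mul_assoc]
    simp only [t', Function.update_self]
    congr 1
    exact Finset.prod_congr rfl fun j hj => by
      rw [Function.update_of_ne (Finset.ne_of_mem_erase hj)]
  simp_rw [hprod, ← Fintype.prod_sum]
  rw [Fintype.prod_eq_single i fun j hj => by simp only [t', Function.update_of_ne hj, ht]]
  simp only [t', Function.update_self]

lemma IsPOVM.map {ι m n : Type*} [Fintype ι] [Fintype m] [DecidableEq m] [Fintype n]
    [DecidableEq n] (Φ : Matrix m m ℂ →+ Matrix n n ℂ)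
    (hpos : ∀ A, A.PosSemidef → (Φ A).PosSemidef) (hone : Φ 1 = 1)
    {B : ι → Matrix m m ℂ} (hB : IsPOVM B) : IsPOVM fun i => Φ (B i) :=
  ⟨fun i => hpos _ (hB.1 i), by rw [← map_sum, hB.2, hone]⟩

lemma KSimulable.map {d d' na nx k : ℕ} {M : Fin nx → Fin na → Matrix (Fin d) (Fin d) ℂ}
    (Φ : Matrix (Fin d) (Fin d) ℂ →ₗ[ℝ] Matrix (Fin d') (Fin d') ℂ)
    (hpos : ∀ A, A.PosSemidef → (Φ A).PosSemidef) (hone : Φ 1 = 1) (hM : KSimulable k M) :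
    KSimulable k fun x a => Φ (M x a) := by
  obtain ⟨nb, B, p, q, hB, hp0, hp1, hq0, hq1, hM⟩ := hM
  refine ⟨nb, fun y b => Φ (B y b), p, q, fun y => (hB y).map Φ.toAddMonoidHom hpos hone,
    hp0, hp1, hq0, hq1, fun x a => ?_⟩
  simp only [hM, map_sum, map_smul]

theorem KSimulable.kCompatibleProd {d na nx k : ℕ}
    {M : Fin nx → Fin na → Matrix (Fin d) (Fin d) ℂ}
    (hM : KSimulable k M) : KCompatibleProd k M := by
  obtain ⟨nb, B, p, q, hB, hp0, hp1, hq0, hq1, hM⟩ := hM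
  refine ⟨nb, B, fun x b a => ∑ y, p x y * q x y (b y) a, hB,
    fun x b a => Finset.sum_nonneg fun y _ => mul_nonneg (hp0 x y) (hq0 x y (b y) a),
    fun x b => ?_, fun ρ hρ x a => ?_⟩
  · rw [Finset.sum_comm]
    simp only [← Finset.mul_sum, hq1, mul_one, hp1]
  · have hprob (y : Fin k) : ∑ c, (ρ * B y c).trace = 1 := by
      rw [← trace_sum, ← Matrix.mul_sum, (hB y).2, mul_one, hρ.2]
    calc (ρ * M x a).trace
        = ∑ y, (p x y : ℂ) * ∑ c, (q x y c a : ℂ) * (ρ * B y c).trace := by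
          simp [hM, Complex.real_smul, Finset.mul_sum]
      _ = ∑ y, (p x y : ℂ) * ∑ b : Fin k → Fin nb,
            (q x y (b y) a : ℂ) * ∏ y', (ρ * B y' (b y')).trace := by
          refine Finset.sum_congr rfl fun y _ => ?_
          rw [Fintype.sum_mul_prod_of_sum_eq_one hprob y fun c => (q x y c a : ℂ)]
      _ = ∑ b : Fin k → Fin nb, (∑ y, p x y * q x y (b y) a) •
            (tpow k ρ * prodOp fun y => B y (b y)).trace := by
          simp only [trace_tpow_mul_prodOp, Complex.real_smul, Finset.mul_sum, Finset.sum_mul,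
            Complex.ofReal_sum, Complex.ofReal_mul, mul_assoc]
          exact Finset.sum_comm

section InvSqrt

variable {n : Type*} [Fintype n] [DecidableEq n] {A : Matrix n n ℂ}

lemma invSqrt_eq_inv_sqrt (hA : A.PosSemidef) : invSqrt A = (CFC.sqrt A)⁻¹ := by
  rw [invSqrt, dif_pos hA, CFC.sqrt_eq_real_sqrt A hA.nonneg, cfcₙ_eq_cfc, hA.1.cfc_eq]
  rfl

lemma isHermitian_invSqrt (hA : A.PosSemidef) : (invSqrt A).IsHermitian := by
  rw [invSqrt_eq_inv_sqrt hA]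
  exact (CFC.sqrt_nonneg A).posSemidef.1.inv

lemma invSqrt_mul_mul_invSqrt (hA : A.PosSemidef) (hU : IsUnit A) :
    invSqrt A * A * invSqrt A = 1 := by
  have hdet : IsUnit (CFC.sqrt A).det :=
    (isUnit_iff_isUnit_det _).1 ((CFC.isUnit_sqrt_iff A hA.nonneg).2 hU)
  rw [invSqrt_eq_inv_sqrt hA]
  nth_rw 2 [← CFC.sqrt_mul_sqrt_self A hA.nonneg]
  rw [← mul_assoc, nonsing_inv_mul _ hdet, one_mul, mul_nonsing_inv _ hdet]

end InvSqrt

section PartialTrace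

variable {dA dB : ℕ}

lemma trA_add (X Y : Matrix (Fin dA × Fin dB) (Fin dA × Fin dB) ℂ) :
    trA (X + Y) = trA X + trA Y := by
  ext j j'
  simp [trA, Finset.sum_add_distrib]

lemma trA_smul (c : ℂ) (X : Matrix (Fin dA × Fin dB) (Fin dA × Fin dB) ℂ) :
    trA (c • X) = c • trA X := by
  ext j j'
  simp [trA, Finset.mul_sum]

/-- The Kraus operator `|i⟩ ⊗ 𝟙` of the partial trace. -/
def trAKraus (dB : ℕ) (i : Fin dA) : Matrix (Fin dA × Fin dB) (Fin dB) ℂ :=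
  of fun p j => if p = (i, j) then 1 else 0

lemma trA_eq_sum_trAKraus (X : Matrix (Fin dA × Fin dB) (Fin dA × Fin dB) ℂ) :
    trA X = ∑ i : Fin dA, (trAKraus dB i)ᴴ * X * trAKraus dB i := by
  ext j j'
  simp [trA, trAKraus, mul_apply, Matrix.sum_apply]

lemma Matrix.PosSemidef.trA {X : Matrix (Fin dA × Fin dB) (Fin dA × Fin dB) ℂ}
    (hX : X.PosSemidef) : (trA X).PosSemidef := by
  rw [trA_eq_sum_trAKraus]
  exact posSemidef_sum _ fun i _ => hX.conjTranspose_mul_mul_same _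

lemma trA_kronecker_one_mul_comm (C : Matrix (Fin dA) (Fin dA) ℂ)
    (X : Matrix (Fin dA × Fin dB) (Fin dA × Fin dB) ℂ) :
    trA ((C ⊗ₖ (1 : Matrix (Fin dB) (Fin dB) ℂ)) * X) = trA (X * (C ⊗ₖ 1)) := by
  ext j j'
  simp only [trA, of_apply, mul_apply, Fintype.sum_prod_type, kroneckerMap_apply, one_apply,
    mul_ite, ite_mul, mul_one, mul_zero, zero_mul, Finset.sum_ite_eq, Finset.sum_ite_eq',
    Finset.mem_univ, if_true]
  rw [Finset.sum_comm]
  simp [mul_comm]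

end PartialTrace

section SEO

variable {dA dB : ℕ} (ρAB : Matrix (Fin dA × Fin dB) (Fin dA × Fin dB) ℂ)

def seoLinearMap : Matrix (Fin dA) (Fin dA) ℂ →ₗ[ℂ] Matrix (Fin dB) (Fin dB) ℂ where
  toFun := SEO ρAB
  map_add' A B := by simp only [SEO, add_kronecker, add_mul, trA_add, mul_add]
  map_smul' c A := by
    simp only [SEO, smul_kronecker, smul_mul_assoc, trA_smul, mul_smul_comm, RingHom.id_apply]

variable {ρAB}

lemma SEO_one (hρ : ρAB.PosSemidef) (hinv : IsUnit (trA ρAB)) :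
    SEO ρAB (1 : Matrix (Fin dA) (Fin dA) ℂ) = 1 := by
  rw [SEO, one_kronecker_one, one_mul]
  exact invSqrt_mul_mul_invSqrt hρ.trA hinv

lemma posSemidef_trA_kronecker_one_mul (hρ : ρAB.PosSemidef)
    {A : Matrix (Fin dA) (Fin dA) ℂ} (hA : A.PosSemidef) :
    (trA ((A ⊗ₖ (1 : Matrix (Fin dB) (Fin dB) ℂ)) * ρAB)).PosSemidef := by
  obtain ⟨S, rfl⟩ := CStarAlgebra.nonneg_iff_eq_star_mul_self.mp hA.nonneg
  have hadj : Sᴴ ⊗ₖ (1 : Matrix (Fin dB) (Fin dB) ℂ) = (S ⊗ₖ 1)ᴴ := by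
    rw [conjTranspose_kronecker, conjTranspose_one]
  rw [← one_mul (1 : Matrix (Fin dB) (Fin dB) ℂ), mul_kronecker_mul, mul_assoc,
    trA_kronecker_one_mul_comm, star_eq_conjTranspose, hadj]
  exact (hρ.mul_mul_conjTranspose_same _).trA

lemma SEO_posSemidef (hρ : ρAB.PosSemidef) {A : Matrix (Fin dA) (Fin dA) ℂ}
    (hA : A.PosSemidef) : (SEO ρAB A).PosSemidef := by
  have h := (posSemidef_trA_kronecker_one_mul hρ hA).mul_mul_conjTranspose_same
    (invSqrt (trA ρAB))
  rwa [(isHermitian_invSqrt hρ.trA).eq] at h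

end SEO

theorem seo_kCompatibleProd_of_kSimulable_general {dA dB na nx : ℕ} (k : ℕ)
    (ρAB : Matrix (Fin dA × Fin dB) (Fin dA × Fin dB) ℂ)
    (hρAB : IsDensity ρAB)
    (hinv : IsUnit (trA ρAB))
    (M : Fin nx → Fin na → Matrix (Fin dA) (Fin dA) ℂ) :
    (KSimulable k M → KCompatibleProd k fun x a => SEO ρAB (M x a)) ∧
    (¬ KCompatibleProd k (fun x a => SEO ρAB (M x a)) → ¬ KSimulable k M) := by
  have hSEO : KSimulable k M → KCompatibleProd k fun x a => SEO ρAB (M x a) := fun hM =>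
    (hM.map ((seoLinearMap ρAB).restrictScalars ℝ) (fun _ => SEO_posSemidef hρAB.1)
      (SEO_one hρAB.1 hinv)).kCompatibleProd
  exact ⟨hSEO, mt hSEO⟩

/-- if the assemblage `M` is `k`-simulable, then its steering equivalent
observables are `k`-compatible with a `k`-copy joint observable of product form;
consequently, if the SEO admit no product-form `k`-copy joint observable, then `M` is
not `k`-simulable. -/
theorem seo_kCompatibleProd_of_kSimulable {dA dB na nx : ℕ} (k : ℕ)
    (ρAB : Matrix (Fin dA × Fin dB) (Fin dA × Fin dB) ℂ)
    (hρAB : IsDensity ρAB)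
    (hinv : IsUnit (trA ρAB))
    (M : Fin nx → Fin na → Matrix (Fin dA) (Fin dA) ℂ)
    (hM : ∀ x, IsPOVM (M x)) :
    (KSimulable k M → KCompatibleProd k fun x a => SEO ρAB (M x a)) ∧
    (¬ KCompatibleProd k (fun x a => SEO ρAB (M x a)) → ¬ KSimulable k M) :=
  seo_kCompatibleProd_of_kSimulable_general k ρAB hρAB hinv M
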